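/- Under the hypotheses of the previous recursion (ε₁ = ε, ε_{n+1} = ε_n^{2−α} q, 0 < α < 1/(2(N+1)), N ≥ 1, and ε ≤ b·q^{−(N+1)/N} with q ≥ 2 and b sufficiently small), the sequence ε_n converges to 0; in fact ε_n ≤ (b^c ε^{1−c})^{(2−α)^{n-1}} · (ε/a)^c where c = N/((N+1)(1−α)) < 1, provided a·q^{−(N+1)/N} < ε. -/

import Mathlib

open Filter Topology

/-!
Iterating `ε_{n+1} = ε_n^r q` gives `ε_n = ε^{r^{n-1}} q^{(r^{n-1}-1)/(r-1)}` exactly. The window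
`a q^{-p} < ε ≤ b q^{-p}` turns powers of `q` into powers of `b/ε` and `ε/a`, and with
`c = 1/(p(r-1))` this yields `ε_n ≤ (b^c ε^{1-c})^{r^{n-1}} (ε/a)^c`. The base `b^c ε^{1-c}` is a
weighted geometric mean of `b` and `ε ≤ b`, hence at most `b < 1`, while `r^{n-1} → ∞`.
-/

theorem div_mul_one_sub_lt_one {x α : ℝ} (hx : 0 ≤ x) (hα : α < 1 / (x + 1)) :
    x / ((x + 1) * (1 - α)) < 1 := by
  have hx1 : 0 < x + 1 := by linarith
  rw [lt_div_iff₀ hx1] at hα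
  rw [div_lt_one (by nlinarith)]
  nlinarith

theorem rpow_recursion_eq {e : ℕ → ℝ} {ε q r : ℝ} (hε : 0 ≤ ε) (hq : 0 < q) (hr : r ≠ 1)
    (he1 : e 1 = ε) (hrec : ∀ n, 1 ≤ n → e (n + 1) = e n ^ r * q) (n : ℕ) (hn : 1 ≤ n) :
    e n = ε ^ (r ^ (n - 1)) * q ^ ((r ^ (n - 1) - 1) / (r - 1)) := by
  induction n, hn using Nat.le_induction with
  | base => simp [he1]
  | succ n hn ih =>
    have hr1 : r - 1 ≠ 0 := sub_ne_zero.mpr hr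
    obtain ⟨k, rfl⟩ := Nat.exists_eq_add_of_le' hn
    rw [hrec _ hn, ih, Real.mul_rpow (by positivity) (by positivity), ← Real.rpow_mul hε,
      ← Real.rpow_mul hq.le, mul_assoc, ← Real.rpow_add_one hq.ne']
    simp only [Nat.add_sub_cancel, pow_succ]
    congr 2
    field_simp
    ring

theorem rpow_div_le_of_mem_window {a b ε q p s c m : ℝ} (ha : 0 < a) (hq : 0 < q) (hε : 0 < ε)
    (hc : 0 ≤ c) (hm : 0 ≤ m) (hpsc : p * s * c = 1)
    (hlo : a * q ^ (-p) < ε) (hhi : ε ≤ b * q ^ (-p)) :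
    q ^ ((m - 1) / s) ≤ (b / ε) ^ (c * m) * (ε / a) ^ c := by
  have hs : s ≠ 0 := by rintro rfl; simp at hpsc
  have hsplit : q ^ ((m - 1) / s) = (q ^ p) ^ (c * m) * (q ^ (-p)) ^ c := by
    rw [← Real.rpow_mul hq.le, ← Real.rpow_mul hq.le, ← Real.rpow_add hq]
    congr 1
    field_simp
    linear_combination (1 - m) * hpsc
  have hup : q ^ p ≤ b / ε := by
    rw [Real.rpow_neg hq.le, le_mul_inv_iff₀ (by positivity)] at hhi
    rwa [le_div_iff₀ hε, mul_comm]
  have hdown : q ^ (-p) ≤ ε / a := by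
    rw [le_div_iff₀ ha, mul_comm]
    exact hlo.le
  rw [hsplit]
  gcongr
  exact Real.rpow_nonneg ((Real.rpow_pos_of_pos hq p).le.trans hup) _

theorem rpow_mul_div_rpow_eq {b ε c m : ℝ} (hb : 0 < b) (hε : 0 < ε) :
    ε ^ m * (b / ε) ^ (c * m) = (b ^ c * ε ^ (1 - c)) ^ m := by
  rw [Real.mul_rpow (by positivity) (by positivity), ← Real.rpow_mul hb.le, ← Real.rpow_mul hε.le,
    Real.div_rpow hb.le hε.le, sub_mul, one_mul, Real.rpow_sub hε]
  field_simp

theorem rpow_mul_rpow_one_sub_le {b ε c : ℝ} (hε : 0 ≤ ε) (hεb : ε ≤ b) (hc0 : 0 ≤ c)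
    (hc1 : c ≤ 1) : b ^ c * ε ^ (1 - c) ≤ b :=
  (Real.geom_mean_le_arith_mean2_weighted hc0 (sub_nonneg.2 hc1) (hε.trans hεb) hε
    (by ring)).trans (by nlinarith [mul_nonneg (sub_nonneg.2 hc1) (sub_nonneg.2 hεb)])

theorem tendsto_rpow_pow_mul_const {K r : ℝ} (C : ℝ) (hK0 : 0 ≤ K) (hK1 : K < 1) (hr : 1 < r) :
    Tendsto (fun n : ℕ => K ^ (r ^ (n - 1)) * C) atTop (𝓝 0) := by
  simpa using ((tendsto_rpow_atTop_of_base_lt_one K (by linarith) hK1).comp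
    ((tendsto_pow_atTop_atTop_of_one_lt hr).comp (tendsto_sub_atTop_nat 1))).mul_const C

theorem rpow_recursion_le {e : ℕ → ℝ} {a b ε q p r c : ℝ} (ha : 0 < a) (hq : 0 < q) (hr : 1 < r)
    (hc : 0 ≤ c) (hprc : p * (r - 1) * c = 1)
    (hlo : a * q ^ (-p) < ε) (hhi : ε ≤ b * q ^ (-p))
    (he1 : e 1 = ε) (hrec : ∀ n, 1 ≤ n → e (n + 1) = e n ^ r * q) (n : ℕ) (hn : 1 ≤ n) :
    e n ≤ (b ^ c * ε ^ (1 - c)) ^ (r ^ (n - 1)) * (ε / a) ^ c := by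
  have hε : 0 < ε := lt_of_le_of_lt (by positivity) hlo
  have hb : 0 < b := (mul_pos_iff_of_pos_right (by positivity)).mp (hε.trans_le hhi)
  set m := r ^ (n - 1)
  calc e n = ε ^ m * q ^ ((m - 1) / (r - 1)) := rpow_recursion_eq hε.le hq hr.ne' he1 hrec n hn
    _ ≤ ε ^ m * ((b / ε) ^ (c * m) * (ε / a) ^ c) := by
        gcongr
        exact rpow_div_le_of_mem_window ha hq hε hc (by positivity) hprc hlo hhi
    _ = (b ^ c * ε ^ (1 - c)) ^ m * (ε / a) ^ c := by rw [← mul_assoc, rpow_mul_div_rpow_eq hb hε]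

theorem tendsto_rpow_recursion_zero {e : ℕ → ℝ} {a b ε q p r c : ℝ} (ha : 0 < a) (hq : 1 ≤ q)
    (hp : 0 ≤ p) (hr : 1 < r) (hc0 : 0 ≤ c) (hc1 : c ≤ 1) (hb : b < 1) (hprc : p * (r - 1) * c = 1)
    (hlo : a * q ^ (-p) < ε) (hhi : ε ≤ b * q ^ (-p))
    (he1 : e 1 = ε) (hrec : ∀ n, 1 ≤ n → e (n + 1) = e n ^ r * q) :
    Tendsto e atTop (𝓝 0) := by
  have hq0 : 0 < q := by linarith
  have hε : 0 < ε := lt_of_le_of_lt (by positivity) hlo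
  have hb0 : 0 < b := (mul_pos_iff_of_pos_right (by positivity)).mp (hε.trans_le hhi)
  have hεb : ε ≤ b := hhi.trans (mul_le_of_le_one_right hb0.le
    (Real.rpow_le_one_of_one_le_of_nonpos hq (neg_nonpos.2 hp)))
  have hK : b ^ c * ε ^ (1 - c) < 1 :=
    (rpow_mul_rpow_one_sub_le hε.le hεb hc0 hc1).trans_lt hb
  have hnonneg : ∀ n, 1 ≤ n → 0 ≤ e n := fun n hn => by
    rw [rpow_recursion_eq hε.le hq0 hr.ne' he1 hrec n hn]
    positivity
  refine squeeze_zero' ?_ ?_ (tendsto_rpow_pow_mul_const ((ε / a) ^ c) (by positivity) hK hr)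
  · filter_upwards [eventually_ge_atTop 1] with n hn using hnonneg n hn
  · filter_upwards [eventually_ge_atTop 1] with n hn
    exact rpow_recursion_le ha hq0 hr hc0 hprc hlo hhi he1 hrec n hn

theorem kam_recursion_decay_general (N : ℕ) (hN : 1 ≤ N) (α : ℝ)
    (hα1 : α < 1 / (2 * ((N : ℝ) + 1))) :
    (N : ℝ) / (((N : ℝ) + 1) * (1 - α)) < 1 ∧
    ∃ b₀ > 0, ∀ a b ε q : ℝ, 0 < a → a < b → b ≤ b₀ → 2 ≤ q →
      a * q ^ (-((N : ℝ) + 1) / N) < ε → ε ≤ b * q ^ (-((N : ℝ) + 1) / N) →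
      ∀ e : ℕ → ℝ, e 1 = ε → (∀ n, 1 ≤ n → e (n + 1) = e n ^ (2 - α) * q) →
        Tendsto e atTop (nhds 0) ∧
        ∀ n, 1 ≤ n →
          e n ≤ (b ^ ((N : ℝ) / (((N : ℝ) + 1) * (1 - α))) *
                  ε ^ (1 - (N : ℝ) / (((N : ℝ) + 1) * (1 - α)))) ^ ((2 - α) ^ (n - 1)) *
                (ε / a) ^ ((N : ℝ) / (((N : ℝ) + 1) * (1 - α))) := by
  have hN0 : (0 : ℝ) < N := by exact_mod_cast hN
  have hα : α < 1 / ((N : ℝ) + 1) := hα1.trans_le (by gcongr; linarith)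
  have hs : 0 < 1 - α := by linarith [hα.trans_le (div_le_one_of_le₀ (by linarith) (by positivity))]
  set c := (N : ℝ) / (((N : ℝ) + 1) * (1 - α)) with hc_def
  have hc1 : c < 1 := div_mul_one_sub_lt_one hN0.le hα
  refine ⟨hc1, 1 / 2, by norm_num, fun a b ε q ha _ hb hq hlo hhi e he1 hrec => ?_⟩
  have hr : 1 < 2 - α := by linarith
  have hprc : ((N : ℝ) + 1) / N * ((2 - α) - 1) * c = 1 := by
    rw [hc_def]
    field_simp
    ring
  rw [neg_div] at hlo hhi
  exact ⟨tendsto_rpow_recursion_zero ha (by linarith) (by positivity) hr (by positivity) hc1.le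
      (by linarith) hprc hlo hhi he1 hrec,
    rpow_recursion_le ha (by linarith) hr (by positivity) hprc hlo hhi he1 hrec⟩

/-- Superexponential decay of the KAM scales: with `ε₁ = ε`,
`ε_{n+1} = ε_n^{2−α}·q`, `0 < α < 1/(2(N+1))`, `q ≥ 2` and `b` sufficiently
small, if `a·q^{−(N+1)/N} < ε ≤ b·q^{−(N+1)/N}` then `ε_n → 0` and in fact
`ε_n ≤ (b^c ε^{1−c})^{(2−α)^{n−1}} · (ε/a)^c` with
`c = N/((N+1)(1−α)) < 1`. -/
theorem kam_recursion_decay (N : ℕ) (hN : 1 ≤ N) (α : ℝ)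
    (hα : 0 < α) (hα1 : α < 1 / (2 * ((N : ℝ) + 1))) :
    (N : ℝ) / (((N : ℝ) + 1) * (1 - α)) < 1 ∧
    ∃ b₀ > 0, ∀ a b ε q : ℝ, 0 < a → a < b → b ≤ b₀ → 2 ≤ q →
      a * q ^ (-((N : ℝ) + 1) / N) < ε → ε ≤ b * q ^ (-((N : ℝ) + 1) / N) →
      ∀ e : ℕ → ℝ, e 1 = ε → (∀ n, 1 ≤ n → e (n + 1) = e n ^ (2 - α) * q) →
        Tendsto e atTop (nhds 0) ∧
        ∀ n, 1 ≤ n →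
          e n ≤ (b ^ ((N : ℝ) / (((N : ℝ) + 1) * (1 - α))) *
                  ε ^ (1 - (N : ℝ) / (((N : ℝ) + 1) * (1 - α)))) ^ ((2 - α) ^ (n - 1)) *
                (ε / a) ^ ((N : ℝ) / (((N : ℝ) + 1) * (1 - α))) :=
  kam_recursion_decay_general N hN α hα1
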